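/- arXiv:1304.7804 — 2 statements merged into one kernel-verified Lean document; each statement's English description precedes it below -/
import Mathlib

section
/- If α and β are assemblies producible at temperature τ in the hierarchical model, α and β are consistent (they agree on every position in dom α ∩ dom β), and dom α ∩ dom β ≠ ∅, then the assembly α ∪ β is producible at temperature τ in the hierarchical model. -/
/-- A tile system over a type `T` of tile types: each tile type has, in each
direction (unit vector of `ℤ × ℤ`), a glue label (a natural number `ℕ`), and
each glue label has a nonnegative integer strength given by `str`. -/
structure TileSystem (T : Type) where
  glue : T → ℤ × ℤ → ℕ
  str : ℕ → ℕ

/-- The four unit-vector directions of `ℤ²`. -/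
def dirs : Finset (ℤ × ℤ) := {(0,1), (0,-1), (1,0), (-1,0)}

/-- An assembly: a partial function from `ℤ²` to tile types. -/
abbrev Assembly (T : Type) := ℤ × ℤ → Option T

/-- `D` is the domain of the assembly `α`. -/
def IsDom {T : Type} (α : Assembly T) (D : Finset (ℤ × ℤ)) : Prop :=
  ∀ p, (α p).isSome ↔ p ∈ D

/-- The strength of the bond between positions `p` and `q` in `α`: it is the
strength of the common glue if `q - p` is a unit direction and the glue of the
tile at `p` in direction `q - p` matches the glue of the tile at `q` in
direction `p - q`; otherwise `0`. -/
def bond {T : Type} (ts : TileSystem T) (α : Assembly T) (p q : ℤ × ℤ) : ℕ :=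
  match α p, α q with
  | some t, some t' =>
      if q - p ∈ dirs ∧ ts.glue t (q - p) = ts.glue t' (p - q)
      then ts.str (ts.glue t (q - p)) else 0
  | _, _ => 0

/-- Two positions of `α` interact if they hold tiles binding with positive strength. -/
def Interacts {T : Type} (ts : TileSystem T) (α : Assembly T) (p q : ℤ × ℤ) : Prop :=
  0 < bond ts α p q

/-- Total strength of the interacting glues between positions in `A` and
(adjacent) positions in `B`. -/
def strengthBetween {T : Type} (ts : TileSystem T) (α : Assembly T)
    (A B : Finset (ℤ × ℤ)) : ℕ :=
  ∑ p ∈ A, ∑ q ∈ B, bond ts α p q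

/-- `α` is `τ`-stable: every partition of its domain into two nonempty parts is
crossed by interacting glues of total strength at least `τ`. -/
def Stable {T : Type} (ts : TileSystem T) (α : Assembly T) (τ : ℕ) : Prop :=
  ∀ D A B : Finset (ℤ × ℤ), IsDom α D → A ∪ B = D → Disjoint A B →
    A.Nonempty → B.Nonempty → τ ≤ strengthBetween ts α A B

/-- The union of two assemblies (agreeing with `α` wherever `α` is defined). -/
def aunion {T : Type} (α β : Assembly T) : Assembly T :=
  fun p => match α p with
    | some t => some t
    | none => β p

/-- Producibility in the hierarchical model at temperature `τ`: an assembly is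
producible if it is a single tile, or the `τ`-stable union of two producible
assemblies with disjoint domains. -/
inductive Producible {T : Type} (ts : TileSystem T) (τ : ℕ) : Assembly T → Prop where
  | single (p : ℤ × ℤ) (t : T) :
      Producible ts τ (fun q => if q = p then some t else none)
  | union {α β : Assembly T} :
      Producible ts τ α → Producible ts τ β →
      (∀ p, α p = none ∨ β p = none) →
      Stable ts (aunion α β) τ →
      Producible ts τ (aunion α β)

/-- Two assemblies are consistent if they agree wherever both are defined. -/
def Consistent {T : Type} (α β : Assembly T) : Prop :=
  ∀ p t t', α p = some t → β p = some t' → t = t'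

/-- `α` is a subassembly of `β`. -/
def Subassembly {T : Type} (α β : Assembly T) : Prop :=
  ∀ p t, α p = some t → β p = some t

/-- A producible assembly is terminal if no producible assembly can stably attach to it. -/
def Terminal {T : Type} (ts : TileSystem T) (τ : ℕ) (α : Assembly T) : Prop :=
  ∀ β : Assembly T, Producible ts τ β → (∀ p, α p = none ∨ β p = none) →
    ¬ Stable ts (aunion α β) τ

/-- The hierarchical system uniquely produces `α` if the set of producible
terminal assemblies equals `{α}`. -/
def UniquelyProduces {T : Type} (ts : TileSystem T) (τ : ℕ) (α : Assembly T) : Prop :=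
  {γ : Assembly T | Producible ts τ γ ∧ Terminal ts τ γ} = {α}

/-- `𝒞` is a partition of the finite set `D`: pairwise disjoint nonempty parts
whose union is `D`. -/
def IsPartition (𝒞 : Finset (Finset (ℤ × ℤ))) (D : Finset (ℤ × ℤ)) : Prop :=
  (∀ C ∈ 𝒞, C.Nonempty) ∧
  (∀ C₁ ∈ 𝒞, ∀ C₂ ∈ 𝒞, C₁ ≠ C₂ → Disjoint C₁ C₂) ∧
  𝒞.sup id = D
/-! The proof is by induction on the assembly of `β`. A single tile overlapping `α` is already in `α`.
If `β = β₁ ∪ β₂` with disjoint producible halves, `α` overlaps one of them, say `β₁`, and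
`γ = α ∪ β₁` is producible by induction. If `γ` overlaps `β₂` we conclude by induction again;
otherwise `α ∪ β` is the disjoint union of `γ` and `β₂`, and it is stable because any cut of the
union of two stable assemblies sharing a position restricts to a proper cut of one of them. -/

namespace Assembly

variable {T : Type}

def DomDisjoint (α β : Assembly T) : Prop :=
  ∀ p, α p = none ∨ β p = none

def Overlaps (α β : Assembly T) : Prop :=
  ∃ p, (α p).isSome ∧ (β p).isSome

variable {α β γ : Assembly T} {p : ℤ × ℤ}

theorem DomDisjoint.symm (h : DomDisjoint α β) : DomDisjoint β α :=
  fun p => (h p).symm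

theorem not_overlaps_iff : ¬ Overlaps α β ↔ DomDisjoint α β := by
  simp only [Overlaps, DomDisjoint, not_exists, not_and_or, Option.not_isSome_iff_eq_none]

theorem aunion_apply_of_eq_some {t : T} (h : α p = some t) : aunion α β p = some t := by
  simp only [aunion, h]

theorem aunion_apply_of_eq_none (h : α p = none) : aunion α β p = β p := by
  simp only [aunion, h]

theorem isSome_aunion_iff : (aunion α β p).isSome ↔ (α p).isSome ∨ (β p).isSome := by
  cases h : α p <;> simp [aunion, h]

theorem aunion_apply_of_isSome_left (h : (α p).isSome) : aunion α β p = α p := by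
  obtain ⟨t, ht⟩ := Option.isSome_iff_exists.mp h
  rw [aunion_apply_of_eq_some ht, ht]

theorem aunion_apply_of_isSome_right (hcons : Consistent α β) (h : (β p).isSome) :
    aunion α β p = β p := by
  obtain ⟨t, ht⟩ := Option.isSome_iff_exists.mp h
  cases hα : α p with
  | none => rw [aunion_apply_of_eq_none hα]
  | some s => rw [aunion_apply_of_eq_some hα, ht, hcons p s t hα ht]

theorem aunion_assoc (α β γ : Assembly T) : aunion (aunion α β) γ = aunion α (aunion β γ) := by
  funext p
  cases h : α p <;> simp [aunion, h]

theorem aunion_comm_of_domDisjoint (h : DomDisjoint α β) : aunion α β = aunion β α := by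
  funext p
  rcases h p with h' | h' <;> cases hα : α p <;> cases hβ : β p <;> simp_all [aunion]

theorem aunion_single_eq_self {q : ℤ × ℤ} {t : T} (h : α q = some t) :
    aunion α (fun r => if r = q then some t else none) = α := by
  funext r
  by_cases hr : r = q
  · subst hr
    simp [aunion, h]
  · cases hα : α r <;> simp [aunion, hα, hr]

theorem Overlaps.of_aunion_right (h : Overlaps α (aunion β γ)) :
    Overlaps α β ∨ Overlaps α γ := by
  obtain ⟨p, hα, hβγ⟩ := h
  rcases isSome_aunion_iff.mp hβγ with hβ | hγ
  · exact Or.inl ⟨p, hα, hβ⟩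
  · exact Or.inr ⟨p, hα, hγ⟩

end Assembly

namespace Consistent

open Assembly

variable {T : Type} {α β γ : Assembly T}

theorem of_aunion_right (h : Consistent α (aunion β γ)) : Consistent α β :=
  fun p _ _ hα hβ => h p _ _ hα (aunion_apply_of_eq_some hβ)

theorem aunion_left (hdisj : DomDisjoint β γ) (h : Consistent α γ) :
    Consistent (aunion α β) γ := by
  intro p t t' hαβ hγ
  cases hα : α p with
  | some s => exact h p t t' (hα.trans (aunion_apply_of_eq_some hα ▸ hαβ)) hγ
  | none =>
      rw [aunion_apply_of_eq_none hα] at hαβ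
      rcases hdisj p with hn | hn <;> simp_all

end Consistent

section Stability

variable {T : Type} (ts : TileSystem T) {τ : ℕ}

theorem strengthBetween_congr {α α' : Assembly T} {A B : Finset (ℤ × ℤ)}
    (h : ∀ r ∈ A ∪ B, α r = α' r) :
    strengthBetween ts α A B = strengthBetween ts α' A B :=
  Finset.sum_congr rfl fun p hp => Finset.sum_congr rfl fun q hq => by
    simp only [bond, h p (Finset.mem_union_left B hp), h q (Finset.mem_union_right A hq)]

theorem strengthBetween_mono (α : Assembly T) {A A' B B' : Finset (ℤ × ℤ)}
    (hA : A ⊆ A') (hB : B ⊆ B') :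
    strengthBetween ts α A B ≤ strengthBetween ts α A' B' := by
  unfold strengthBetween
  calc ∑ p ∈ A, ∑ q ∈ B, bond ts α p q ≤ ∑ p ∈ A, ∑ q ∈ B', bond ts α p q :=
        Finset.sum_le_sum fun _ _ => Finset.sum_le_sum_of_subset hB
    _ ≤ ∑ p ∈ A', ∑ q ∈ B', bond ts α p q := Finset.sum_le_sum_of_subset hA

theorem Stable.le_strengthBetween_of_eqOn {δ α : Assembly T} {D A B : Finset (ℤ × ℤ)}
    (hs : Stable ts δ τ) (hD : IsDom δ D) (heq : ∀ r ∈ D, α r = δ r)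
    (hcover : D ⊆ A ∪ B) (hdisj : Disjoint A B)
    (hA : (A ∩ D).Nonempty) (hB : (B ∩ D).Nonempty) :
    τ ≤ strengthBetween ts α A B :=
  calc τ ≤ strengthBetween ts δ (A ∩ D) (B ∩ D) :=
        hs D _ _ hD (by rw [← Finset.union_inter_distrib_right, Finset.inter_eq_right.mpr hcover])
          (hdisj.mono Finset.inter_subset_left Finset.inter_subset_left) hA hB
    _ = strengthBetween ts α (A ∩ D) (B ∩ D) :=
        strengthBetween_congr ts fun r hr => (heq r (by grind)).symm
    _ ≤ strengthBetween ts α A B :=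
        strengthBetween_mono ts α Finset.inter_subset_left Finset.inter_subset_left

open Assembly in
theorem Stable.aunion {α β : Assembly T} {Dα Dβ : Finset (ℤ × ℤ)}
    (hα : Stable ts α τ) (hβ : Stable ts β τ) (hDα : IsDom α Dα) (hDβ : IsDom β Dβ)
    (hcons : Consistent α β) {p : ℤ × ℤ} (hpα : p ∈ Dα) (hpβ : p ∈ Dβ) :
    Stable ts (aunion α β) τ := by
  intro D A B hD hAB hdisj hA hB
  have hcover : Dα ∪ Dβ = A ∪ B := by
    ext q
    rw [hAB, ← hD q, isSome_aunion_iff, Finset.mem_union, hDα, hDβ]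
  by_cases hcut : (A ∩ Dβ).Nonempty ∧ (B ∩ Dβ).Nonempty
  · exact hβ.le_strengthBetween_of_eqOn ts hDβ
      (fun r hr => aunion_apply_of_isSome_right hcons ((hDβ r).mpr hr))
      (hcover ▸ Finset.subset_union_right) hdisj hcut.1 hcut.2
  · -- one part misses `Dβ`, so lies in `Dα`; the other then contains `p ∈ Dα ∩ Dβ`
    have hcut' : (A ∩ Dα).Nonempty ∧ (B ∩ Dα).Nonempty := by
      simp only [Finset.Nonempty, Finset.mem_inter, Finset.ext_iff, Finset.mem_union] at *
      grind
    exact hα.le_strengthBetween_of_eqOn ts hDα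
      (fun r hr => aunion_apply_of_isSome_left ((hDα r).mpr hr))
      (hcover ▸ Finset.subset_union_left) hdisj hcut'.1 hcut'.2

end Stability

namespace Producible

open Assembly

variable {T : Type} {ts : TileSystem T} {τ : ℕ} {α β : Assembly T}

theorem exists_isDom (h : Producible ts τ α) : ∃ D, IsDom α D := by
  induction h with
  | single p t => exact ⟨{p}, fun q => by by_cases hq : q = p <;> simp [hq]⟩
  | union _ _ _ _ ihα ihβ =>
      obtain ⟨Dα, hDα⟩ := ihα
      obtain ⟨Dβ, hDβ⟩ := ihβ
      exact ⟨Dα ∪ Dβ, fun q => by rw [isSome_aunion_iff, Finset.mem_union, hDα, hDβ]⟩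

theorem stable (h : Producible ts τ α) : Stable ts α τ := by
  induction h with
  | single p t =>
      intro D A B hD hAB hdisj ⟨a, ha⟩ ⟨b, hb⟩
      have hdom : ∀ q ∈ A ∪ B, q = p := fun q hq => by
        by_contra hne
        simpa [hne] using (hD q).mpr (hAB ▸ hq)
      have hab : a = b := (hdom a (Finset.mem_union_left B ha)).trans
        (hdom b (Finset.mem_union_right A hb)).symm
      exact absurd (hab ▸ ha) (Finset.disjoint_right.mp hdisj hb)
  | union _ _ _ hs _ _ => exact hs

theorem stable_aunion (hα : Producible ts τ α) (hβ : Producible ts τ β)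
    (hcons : Consistent α β) (hover : Overlaps α β) : Stable ts (aunion α β) τ := by
  obtain ⟨Dα, hDα⟩ := hα.exists_isDom
  obtain ⟨Dβ, hDβ⟩ := hβ.exists_isDom
  obtain ⟨p, hpα, hpβ⟩ := hover
  exact hα.stable.aunion ts hβ.stable hDα hDβ hcons ((hDα p).mp hpα) ((hDβ p).mp hpβ)

end Producible

namespace Assembly

variable {T : Type}

def Mergeable (ts : TileSystem T) (τ : ℕ) (β : Assembly T) : Prop :=
  ∀ α, Producible ts τ α → Consistent α β → Overlaps α β → Producible ts τ (aunion α β)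

theorem mergeable_single (ts : TileSystem T) (τ : ℕ) (p : ℤ × ℤ) (t : T) :
    Mergeable ts τ (fun q => if q = p then some t else none) := by
  rintro α hα hcons ⟨q, hqα, hqβ⟩
  obtain rfl : q = p := by
    by_contra hne
    simp [hne] at hqβ
  obtain ⟨s, hs⟩ := Option.isSome_iff_exists.mp hqα
  obtain rfl : s = t := hcons q s t hs (by simp)
  rwa [aunion_single_eq_self hs]

variable {ts : TileSystem T} {τ : ℕ} {β₁ β₂ : Assembly T}

theorem Mergeable.aunion_of_overlaps_left (h₁ : Mergeable ts τ β₁) (h₂ : Mergeable ts τ β₂)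
    (hβ₂ : Producible ts τ β₂) (hdisj : DomDisjoint β₁ β₂) {α : Assembly T}
    (hα : Producible ts τ α) (hcons : Consistent α (aunion β₁ β₂)) (hover : Overlaps α β₁)
    (hs : Stable ts (aunion α (aunion β₁ β₂)) τ) :
    Producible ts τ (aunion α (aunion β₁ β₂)) := by
  have hγ : Producible ts τ (aunion α β₁) := h₁ α hα hcons.of_aunion_right hover
  have hcons₂ : Consistent α β₂ := by
    rw [aunion_comm_of_domDisjoint hdisj] at hcons
    exact hcons.of_aunion_right
  rw [← aunion_assoc] at hs ⊢
  by_cases hover₂ : Overlaps (aunion α β₁) β₂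
  · exact h₂ _ hγ (hcons₂.aunion_left hdisj) hover₂
  · exact Producible.union hγ hβ₂ (not_overlaps_iff.mp hover₂) hs

theorem Mergeable.aunion (hβ₁ : Producible ts τ β₁) (hβ₂ : Producible ts τ β₂)
    (hdisj : DomDisjoint β₁ β₂) (hstab : Stable ts (aunion β₁ β₂) τ)
    (h₁ : Mergeable ts τ β₁) (h₂ : Mergeable ts τ β₂) : Mergeable ts τ (aunion β₁ β₂) := by
  intro α hα hcons hover
  have hs := hα.stable_aunion (Producible.union hβ₁ hβ₂ hdisj hstab) hcons hover
  rcases hover.of_aunion_right with hover₁ | hover₂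
  · exact h₁.aunion_of_overlaps_left h₂ hβ₂ hdisj hα hcons hover₁ hs
  · rw [aunion_comm_of_domDisjoint hdisj] at hcons hs ⊢
    exact h₂.aunion_of_overlaps_left h₁ hβ₁ hdisj.symm hα hcons hover₂ hs

end Assembly

theorem Producible.mergeable {T : Type} {ts : TileSystem T} {τ : ℕ} {β : Assembly T}
    (h : Producible ts τ β) : β.Mergeable ts τ := by
  induction h with
  | single p t => exact Assembly.mergeable_single ts τ p t
  | union hβ₁ hβ₂ hdisj hstab h₁ h₂ => exact Assembly.Mergeable.aunion hβ₁ hβ₂ hdisj hstab h₁ h₂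

theorem union_producible_general {T : Type} (ts : TileSystem T)
    (τ : ℕ) (α β : Assembly T)
    (hα : Producible ts τ α) (hβ : Producible ts τ β)
    (hcons : Consistent α β)
    (hover : ∃ p, (α p).isSome ∧ (β p).isSome) :
    Producible ts τ (aunion α β) :=
  hβ.mergeable α hα hcons hover

/-- If `α` and `β` are producible at temperature `τ` in the
hierarchical model, consistent, and have overlapping domains, then `α ∪ β` is
producible. -/
theorem union_producible {T : Type} [Fintype T] (ts : TileSystem T)
    (τ : ℕ) (hτ : 0 < τ) (α β : Assembly T)
    (hα : Producible ts τ α) (hβ : Producible ts τ β)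
    (hcons : Consistent α β)
    (hover : ∃ p, (α p).isSome ∧ (β p).isSome) :
    Producible ts τ (aunion α β) :=
  union_producible_general ts τ α β hα hβ hcons hover
end

section
/- Let 𝒯 = (T, s, 1) be a seeded tile assembly system at temperature 1 with a single seed tile s placed at position p₀, and let α be a producible assembly of 𝒯 such that every producible assembly of 𝒯 is a subassembly of α. For distinct positions p, q ∈ dom α, the following are equivalent: (1) every producible assembly β of 𝒯 with q ∈ dom β satisfies p ∈ dom β; (2) every path in the binding graph of α from the seed position p₀ to q passes through p (equivalently, removing vertex p from the binding graph of α disconnects q from p₀). -/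
/-- Producibility in the seeded model with seed assembly `σ` at temperature `τ`:
an assembly is producible if it is the seed, or is obtained from a producible
assembly by placing a single tile at an empty position adjacent to the assembly
such that the result is `τ`-stable. -/
inductive SProducible {T : Type} (ts : TileSystem T) (σ : Assembly T) (τ : ℕ) :
    Assembly T → Prop where
  | seed : SProducible ts σ τ σ
  | attach {α : Assembly T} (p : ℤ × ℤ) (t : T) :
      SProducible ts σ τ α →
      α p = none →
      (∃ d ∈ dirs, (α (p + d)).isSome) →
      Stable ts (Function.update α p (some t)) τ →
      SProducible ts σ τ (Function.update α p (some t))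

/-- In the seeded model, `α` is terminal if no tile can be attached `τ`-stably to it. -/
def STerminal {T : Type} (ts : TileSystem T) (τ : ℕ) (α : Assembly T) : Prop :=
  ∀ (p : ℤ × ℤ) (t : T), α p = none →
    ¬ ((∃ d ∈ dirs, (α (p + d)).isSome) ∧ Stable ts (Function.update α p (some t)) τ)

/-- The seeded system uniquely produces `α` if its set of producible terminal
assemblies equals `{α}`. -/
def SUniquelyProduces {T : Type} (ts : TileSystem T) (σ : Assembly T) (τ : ℕ)
    (α : Assembly T) : Prop :=
  {γ : Assembly T | SProducible ts σ τ γ ∧ STerminal ts τ γ} = {α}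

/-- The binding graph of `α` is connected: any two positions of its domain are
joined by a path of interacting positions. -/
def BindingConnected {T : Type} (ts : TileSystem T) (α : Assembly T) : Prop :=
  ∀ p q, (α p).isSome → (α q).isSome → Relation.ReflTransGen (Interacts ts α) p q

/-!
At temperature 1 a tile attaches stably exactly when it binds to a tile already present, so
every producible assembly is connected in its binding graph, and conversely any assembly that is
connected in its binding graph is 1-stable. Since every producible assembly `β` is a
subassembly of `α`, the bonds of `β` are bonds of `α`: if `β` contains `q` but not `p`, its
binding graph gives a path from `p₀` to `q` in that of `α` avoiding `p`. Conversely, the tiles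
of `α` along such a path can be attached one after the other, each binding to its predecessor,
which produces an assembly containing `q` but not `p`.
-/

section Bonds

variable {T : Type} {ts : TileSystem T} {γ γ' : Assembly T} {a b c : ℤ × ℤ}

lemma neg_mem_dirs {d : ℤ × ℤ} (h : d ∈ dirs) : -d ∈ dirs := by
  fin_cases h <;> decide

lemma bond_comm (ts : TileSystem T) (γ : Assembly T) (a b : ℤ × ℤ) :
    bond ts γ a b = bond ts γ b a := by
  rcases ha : γ a with _ | ta <;> rcases hb : γ b with _ | tb <;> simp only [bond, ha, hb]
  have hdirs : b - a ∈ dirs ↔ a - b ∈ dirs :=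
    ⟨fun h => by simpa using neg_mem_dirs h, fun h => by simpa using neg_mem_dirs h⟩
  by_cases h : b - a ∈ dirs ∧ ts.glue ta (b - a) = ts.glue tb (a - b)
  · rw [if_pos h, if_pos ⟨hdirs.1 h.1, h.2.symm⟩, h.2]
  · rw [if_neg h, if_neg fun h' => h ⟨hdirs.2 h'.1, h'.2.symm⟩]

lemma Interacts.symm (h : Interacts ts γ a b) : Interacts ts γ b a := by
  rwa [Interacts, bond_comm]

instance : Std.Symm (Interacts ts γ) := ⟨fun _ _ => Interacts.symm⟩

lemma Interacts.isSome_left (h : Interacts ts γ a b) : (γ a).isSome := by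
  unfold Interacts bond at h
  split at h <;> simp_all

lemma Interacts.isSome_right (h : Interacts ts γ a b) : (γ b).isSome :=
  h.symm.isSome_left

lemma Interacts.sub_mem_dirs (h : Interacts ts γ a b) : b - a ∈ dirs := by
  unfold Interacts bond at h
  split at h
  · split_ifs at h with hab
    exacts [hab.1, absurd h (lt_irrefl 0)]
  · exact absurd h (lt_irrefl 0)

lemma interacts_congr (ha : γ' a = γ a) (hb : γ' b = γ b) :
    Interacts ts γ' a b ↔ Interacts ts γ a b := by
  unfold Interacts bond
  rw [ha, hb]

lemma Interacts.mono {β : Assembly T} (hsub : Subassembly β γ) (h : Interacts ts β a b) :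
    Interacts ts γ a b := by
  obtain ⟨ta, hta⟩ := Option.isSome_iff_exists.mp h.isSome_left
  obtain ⟨tb, htb⟩ := Option.isSome_iff_exists.mp h.isSome_right
  rwa [interacts_congr ((hsub a ta hta).trans hta.symm) ((hsub b tb htb).trans htb.symm)]

lemma subassembly_update_of_eq_none {t : T} (hc : γ c = none) :
    Subassembly γ (Function.update γ c (some t)) := by
  intro r tr hr
  rwa [Function.update_of_ne (by rintro rfl; simp [hc] at hr)]

lemma isDom_update {D : Finset (ℤ × ℤ)} {t : T} (hD : IsDom γ D) :
    IsDom (Function.update γ c (some t)) (insert c D) := by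
  intro r
  by_cases hr : r = c
  · simp [hr]
  · simp [hD r, hr]

end Bonds

section Connectivity

variable {T : Type} {ts : TileSystem T} {γ : Assembly T}

/-- A path from `A` to `B` in the binding graph must cross the cut between them. -/
lemma BindingConnected.stable_one (h : BindingConnected ts γ) : Stable ts γ 1 := by
  rintro D A B hD rfl hdisj ⟨a, ha⟩ ⟨b, hb⟩
  have hsa : (γ a).isSome := (hD a).2 (Finset.mem_union_left B ha)
  have hsb : (γ b).isSome := (hD b).2 (Finset.mem_union_right A hb)
  suffices ∀ b', Relation.ReflTransGen (Interacts ts γ) a b' → b' ∈ B →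
      1 ≤ strengthBetween ts γ A B from this b (h a b hsa hsb) hb
  intro b' hpath
  induction hpath with
  | refl => exact fun hab => absurd hab (Finset.disjoint_left.mp hdisj ha)
  | @tail m c _ hmc ih =>
    intro hc
    rcases Finset.mem_union.mp ((hD m).1 hmc.isSome_left) with hmA | hmB
    · calc 1 ≤ bond ts γ m c := hmc
        _ ≤ ∑ q ∈ B, bond ts γ m q := Finset.single_le_sum (fun _ _ => Nat.zero_le _) hc
        _ ≤ strengthBetween ts γ A B :=
          Finset.single_le_sum (f := fun p => ∑ q ∈ B, bond ts γ p q)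
            (fun _ _ => Nat.zero_le _) hmA
    · exact ih hmB

lemma BindingConnected.update (h : BindingConnected ts γ) {c m : ℤ × ℤ} {t : T}
    (hc : γ c = none) (hm : (γ m).isSome)
    (hcm : Interacts ts (Function.update γ c (some t)) c m) :
    BindingConnected ts (Function.update γ c (some t)) := by
  have to_m : ∀ z, (Function.update γ c (some t) z).isSome →
      Relation.ReflTransGen (Interacts ts (Function.update γ c (some t))) z m := by
    intro z hz
    by_cases hzc : z = c
    · subst hzc
      exact .single hcm
    · rw [Function.update_of_ne hzc] at hz
      exact Relation.ReflTransGen.mono (fun _ _ => Interacts.mono (subassembly_update_of_eq_none hc))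
        _ _ (h z m hz hm)
  exact fun x w hx hw => (to_m x hx).trans (Std.Symm.symm _ _ (to_m w hw))

lemma Stable.exists_interacts_update {c : ℤ × ℤ} {t : T} {D : Finset (ℤ × ℤ)}
    (hstab : Stable ts (Function.update γ c (some t)) 1) (hc : γ c = none) (hD : IsDom γ D)
    (hne : D.Nonempty) :
    ∃ m, (γ m).isSome ∧ Interacts ts (Function.update γ c (some t)) c m := by
  have hcD : c ∉ D := fun hm => by simpa [hc] using (hD c).2 hm
  have hstr := hstab _ {c} D (isDom_update hD) (Finset.insert_eq c D).symm
    (Finset.disjoint_singleton_left.mpr hcD) (Finset.singleton_nonempty c) hne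
  rw [strengthBetween, Finset.sum_singleton] at hstr
  obtain ⟨m, hmD, hm⟩ := Finset.exists_ne_zero_of_sum_ne_zero (Nat.one_le_iff_ne_zero.mp hstr)
  exact ⟨m, (hD m).2 hmD, Nat.pos_of_ne_zero hm⟩

end Connectivity

section Seeded

variable {T : Type} {ts : TileSystem T} {σ α β : Assembly T}

lemma SProducible.seed_subassembly {τ : ℕ} (h : SProducible ts σ τ β) : Subassembly σ β := by
  induction h with
  | seed => exact fun _ _ h => h
  | attach c t _ hc _ _ ih =>
    intro r tr hr
    exact subassembly_update_of_eq_none hc r tr (ih r tr hr)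

lemma SProducible.exists_isDom {τ : ℕ} {D : Finset (ℤ × ℤ)} (hσD : IsDom σ D)
    (h : SProducible ts σ τ β) : ∃ D', IsDom β D' := by
  induction h with
  | seed => exact ⟨D, hσD⟩
  | attach c t _ _ _ _ ih =>
    obtain ⟨D', hD'⟩ := ih
    exact ⟨_, isDom_update hD'⟩

variable {D : Finset (ℤ × ℤ)}

lemma SProducible.bindingConnected (hσ : BindingConnected ts σ) (hσD : IsDom σ D)
    (h : SProducible ts σ 1 β) : BindingConnected ts β := by
  induction h with
  | seed => exact hσ
  | @attach γ c t hγ hc hadj hstab ih =>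
    obtain ⟨D', hD'⟩ := hγ.exists_isDom hσD
    obtain ⟨d, -, hd⟩ := hadj
    obtain ⟨m, hm, hcm⟩ := hstab.exists_interacts_update hc hD' ⟨c + d, (hD' _).1 hd⟩
    exact ih.update hc hm hcm

lemma SProducible.update_of_interacts (hσ : BindingConnected ts σ) (hσD : IsDom σ D)
    (hβ : SProducible ts σ 1 β) (hsub : Subassembly β α) {m c : ℤ × ℤ} {t : T}
    (hc : β c = none) (hm : (β m).isSome) (hmc : Interacts ts α m c) (hαc : α c = some t) :
    SProducible ts σ 1 (Function.update β c (some t)) := by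
  obtain ⟨tm, htm⟩ := Option.isSome_iff_exists.mp hm
  have hmc' : m ≠ c := by rintro rfl; simp [hc] at hm
  have hcm : Interacts ts (Function.update β c (some t)) c m := by
    rw [interacts_congr (γ := α) (by rw [Function.update_self, hαc])
      (by rw [Function.update_of_ne hmc', htm, hsub m tm htm])]
    exact hmc.symm
  refine hβ.attach c t hc ⟨m - c, hmc.symm.sub_mem_dirs, by rwa [add_sub_cancel]⟩ ?_
  exact ((hβ.bindingConnected hσ hσD).update hc hm hcm).stable_one

/-- Attach the tiles of a `p`-avoiding path of `α` one by one. -/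
lemma exists_sproducible_of_path (hσ : BindingConnected ts σ) (hσD : IsDom σ D)
    (hall : ∀ β, SProducible ts σ 1 β → Subassembly β α) {p r c : ℤ × ℤ}
    (hσp : σ p = none) (hr : (σ r).isSome)
    (hpath : Relation.ReflTransGen (fun a b => Interacts ts α a b ∧ a ≠ p ∧ b ≠ p) r c) :
    ∃ β, SProducible ts σ 1 β ∧ (β c).isSome ∧ β p = none := by
  induction hpath with
  | refl => exact ⟨σ, .seed, hr, hσp⟩
  | @tail m c _ hmc ih =>
    obtain ⟨β, hβ, hβm, hβp⟩ := ih
    by_cases hβc : (β c).isSome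
    · exact ⟨β, hβ, hβc, hβp⟩
    obtain ⟨hint, -, hcp⟩ := hmc
    obtain ⟨t, hαc⟩ := Option.isSome_iff_exists.mp hint.isSome_right
    refine ⟨_, hβ.update_of_interacts hσ hσD (hall β hβ) (Option.not_isSome_iff_eq_none.mp hβc)
      hβm hint hαc, by simp, ?_⟩
    rwa [Function.update_of_ne (Ne.symm hcp)]

lemma SProducible.path_avoiding (hσ : BindingConnected ts σ) (hσD : IsDom σ D)
    (hβ : SProducible ts σ 1 β) (hsub : Subassembly β α) {p r q : ℤ × ℤ}
    (hr : (σ r).isSome) (hq : (β q).isSome) (hp : β p = none) :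
    Relation.ReflTransGen (fun a b => Interacts ts α a b ∧ a ≠ p ∧ b ≠ p) r q := by
  obtain ⟨tr, htr⟩ := Option.isSome_iff_exists.mp hr
  have hβr : (β r).isSome := by rw [hβ.seed_subassembly r tr htr]; rfl
  refine Relation.ReflTransGen.mono (fun a b hab => ?_) _ _
    (hβ.bindingConnected hσ hσD r q hβr hq)
  refine ⟨hab.mono hsub, ?_, ?_⟩ <;> rintro rfl
  exacts [absurd hab.isSome_left (by simp [hp]), absurd hab.isSome_right (by simp [hp])]

end Seeded

section SingleSeed

variable {T : Type}

lemma isDom_single (p₀ : ℤ × ℤ) (s : T) :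
    IsDom (fun r => if r = p₀ then some s else none) {p₀} := by
  intro r
  by_cases hr : r = p₀ <;> simp [hr]

lemma bindingConnected_single (ts : TileSystem T) (p₀ : ℤ × ℤ) (s : T) :
    BindingConnected ts (fun r => if r = p₀ then some s else none) := by
  intro x y hx hy
  obtain rfl : x = p₀ := by by_contra h; simp [h] at hx
  obtain rfl : y = x := by by_contra h; simp [h] at hy
  rfl

end SingleSeed

theorem seeded_temp1_precedence_iff_cut_vertex_general {T : Type}
    (ts : TileSystem T) (s : T) (p₀ : ℤ × ℤ) (α : Assembly T)
    (hall : ∀ β : Assembly T,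
      SProducible ts (fun r => if r = p₀ then some s else none) 1 β →
      Subassembly β α)
    (p q : ℤ × ℤ) (hpq : p ≠ q) :
    (∀ β : Assembly T,
        SProducible ts (fun r => if r = p₀ then some s else none) 1 β →
        (β q).isSome → (β p).isSome) ↔
      ¬ Relation.ReflTransGen (fun a b => Interacts ts α a b ∧ a ≠ p ∧ b ≠ p) p₀ q := by
  have hσ := bindingConnected_single ts p₀ s
  have hσD := isDom_single p₀ s
  constructor
  · intro hprec hpath
    have hp₀p : p₀ ≠ p := by
      rcases hpath.cases_head with rfl | ⟨_, ⟨_, hne, _⟩, _⟩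
      exacts [hpq.symm, hne]
    obtain ⟨β, hβ, hβq, hβp⟩ :=
      exists_sproducible_of_path hσ hσD hall (by simp [hp₀p.symm]) (by simp) hpath
    simpa [hβp] using hprec β hβ hβq
  · intro hcut β hβ hβq
    by_contra hβp
    exact hcut <| hβ.path_avoiding hσ hσD (hall β hβ) (by simp) hβq
      (Option.not_isSome_iff_eq_none.mp hβp)

/-- Let `𝒯 = (T, s, 1)` be a seeded system at temperature 1
with single seed tile `s` at position `p₀`, and let `α` be a producible
assembly such that every producible assembly is a subassembly of `α`.  For
distinct `p, q ∈ dom α`: every producible assembly containing `q` contains `p`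
if and only if removing the vertex `p` from the binding graph of `α`
disconnects `q` from the seed position `p₀` (i.e., every path in the binding
graph of `α` from `p₀` to `q` passes through `p`). -/
theorem seeded_temp1_precedence_iff_cut_vertex {T : Type} [Fintype T]
    (ts : TileSystem T) (s : T) (p₀ : ℤ × ℤ) (α : Assembly T)
    (hα : SProducible ts (fun r => if r = p₀ then some s else none) 1 α)
    (hall : ∀ β : Assembly T,
      SProducible ts (fun r => if r = p₀ then some s else none) 1 β →
      Subassembly β α)
    (p q : ℤ × ℤ) (hp : (α p).isSome) (hq : (α q).isSome) (hpq : p ≠ q) :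
    (∀ β : Assembly T,
        SProducible ts (fun r => if r = p₀ then some s else none) 1 β →
        (β q).isSome → (β p).isSome) ↔
      ¬ Relation.ReflTransGen (fun a b => Interacts ts α a b ∧ a ≠ p ∧ b ≠ p) p₀ q :=
  seeded_temp1_precedence_iff_cut_vertex_general ts s p₀ α hall p q hpq
end
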